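/- In the Lie algebra g = sl(2,ℝ) ⋉ ℝ², with basis X₁,…,X₅ satisfying [X₁,X₂]=2X₂, [X₁,X₃]=−2X₃, [X₁,X₄]=X₄, [X₁,X₅]=−X₅, [X₂,X₃]=X₁, [X₃,X₄]=X₅, [X₂,X₅]=X₄, and the inner product making X₁,…,X₅ orthonormal, the five elements X₁, X₂+√2·X₅, X₂−√2·X₅, X₃+√2·X₄, X₃−√2·X₄ form a basis of g consisting of geodesic elements. -/

import Mathlib

/-!
Since `⟨Z, [Z, W]⟩` is linear in `W`, it suffices to test `W = Xⱼ`. For `Z = X₂ + t X₅` every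
bracket `[Z, Xⱼ]` is orthogonal to `Z` except `[Z, X₁] = -2 X₂ + t X₅`, which pairs with `Z` to
`t² - 2`; symmetrically for `Z = X₃ + t X₄`. So `t = ±√2` gives geodesics, and the family is a
basis because `X₂ ± √2 X₅` and `X₃ ± √2 X₄` span the same planes as `X₂, X₅` and `X₃, X₄`.
-/

open Submodule

section Span

variable {K V : Type*} [Field K] [CharZero K] [AddCommGroup V] [Module K V]

lemma mem_span_add_smul_sub_smul {t : K} (ht : t ≠ 0) (x y : V) :
    x ∈ span K {x + t • y, x - t • y} ∧ y ∈ span K {x + t • y, x - t • y} := by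
  refine ⟨mem_span_pair.2 ⟨2⁻¹, 2⁻¹, ?_⟩, mem_span_pair.2 ⟨(2 * t)⁻¹, -(2 * t)⁻¹, ?_⟩⟩ <;>
    match_scalars <;> field_simp <;> ring

def pairedFamily (x : Fin 5 → V) (t : K) : Fin 5 → V :=
  ![x 0, x 1 + t • x 4, x 1 - t • x 4, x 2 + t • x 3, x 2 - t • x 3]

lemma span_pairedFamily (b : Module.Basis (Fin 5) K V) {t : K} (ht : t ≠ 0) :
    span K (Set.range (pairedFamily b t)) = ⊤ := by
  have pair_le : ∀ i j, span K {pairedFamily b t i, pairedFamily b t j} ≤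
      span K (Set.range (pairedFamily b t)) := fun i j =>
    span_mono (Set.pair_subset (Set.mem_range_self i) (Set.mem_range_self j))
  have h14 := mem_span_add_smul_sub_smul ht (b 1) (b 4)
  have h23 := mem_span_add_smul_sub_smul ht (b 2) (b 3)
  rw [eq_top_iff, ← b.span_eq, span_le]
  rintro _ ⟨j, rfl⟩
  fin_cases j
  · exact subset_span ⟨0, rfl⟩
  · exact pair_le 1 2 h14.1
  · exact pair_le 3 4 h23.1
  · exact pair_le 3 4 h23.2
  · exact pair_le 1 2 h14.2

lemma linearIndependent_pairedFamily (b : Module.Basis (Fin 5) K V) {t : K} (ht : t ≠ 0) :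
    LinearIndependent K (pairedFamily b t) :=
  have : FiniteDimensional K V := b.finiteDimensional_of_finite
  linearIndependent_of_top_le_span_of_card_eq_finrank (span_pairedFamily b ht).ge
    (Module.finrank_eq_card_basis b).symm

end Span

section Geodesic

variable {R L ι : Type*} [CommRing R] [LieRing L] [LieAlgebra R L]

def IsGeodesic (B : L →ₗ[R] L →ₗ[R] R) (Z : L) : Prop :=
  ∀ W, B Z ⁅Z, W⁆ = 0

lemma isGeodesic_of_basis (B : L →ₗ[R] L →ₗ[R] R) (b : Module.Basis ι R L) {Z : L}
    (h : ∀ j, B Z ⁅Z, b j⁆ = 0) : IsGeodesic B Z := by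
  have hzero : (B Z).comp (LieAlgebra.ad R L Z) = 0 := b.ext fun j => by simpa using h j
  intro W
  simpa using LinearMap.congr_fun hzero W

end Geodesic

/-- `b i` stands for the paper's `X_{i+1}`. -/
structure IsSl2SemidirectBasis {L : Type*} [LieRing L] [LieAlgebra ℝ L]
    (b : Module.Basis (Fin 5) ℝ L) : Prop where
  lie_01 : ⁅b 0, b 1⁆ = (2 : ℝ) • b 1
  lie_02 : ⁅b 0, b 2⁆ = (-2 : ℝ) • b 2
  lie_03 : ⁅b 0, b 3⁆ = b 3
  lie_04 : ⁅b 0, b 4⁆ = -b 4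
  lie_12 : ⁅b 1, b 2⁆ = b 0
  lie_23 : ⁅b 2, b 3⁆ = b 4
  lie_14 : ⁅b 1, b 4⁆ = b 3
  lie_13 : ⁅b 1, b 3⁆ = 0
  lie_24 : ⁅b 2, b 4⁆ = 0
  lie_34 : ⁅b 3, b 4⁆ = 0

namespace IsSl2SemidirectBasis

variable {L : Type*} [LieRing L] [LieAlgebra ℝ L] {b : Module.Basis (Fin 5) ℝ L}
  {B : L →ₗ[ℝ] L →ₗ[ℝ] ℝ}

lemma isGeodesic_zero (hb : IsSl2SemidirectBasis b)
    (horth : ∀ i j : Fin 5, B (b i) (b j) = if i = j then (1 : ℝ) else 0) :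
    IsGeodesic B (b 0) := by
  refine isGeodesic_of_basis B b fun j => ?_
  fin_cases j <;> simp [hb.lie_01, hb.lie_02, hb.lie_03, hb.lie_04, horth]

lemma isGeodesic_one_add_smul_four (hb : IsSl2SemidirectBasis b)
    (horth : ∀ i j : Fin 5, B (b i) (b j) = if i = j then (1 : ℝ) else 0)
    {t : ℝ} (ht : t * t = 2) : IsGeodesic B (b 1 + t • b 4) := by
  have h10 : ⁅b 1, b 0⁆ = (-2 : ℝ) • b 1 := by rw [← lie_skew, hb.lie_01]; module
  have h40 : ⁅b 4, b 0⁆ = b 4 := by rw [← lie_skew, hb.lie_04, neg_neg]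
  have h41 : ⁅b 4, b 1⁆ = -b 3 := by rw [← lie_skew, hb.lie_14]
  have h42 : ⁅b 4, b 2⁆ = 0 := by rw [← lie_skew, hb.lie_24, neg_zero]
  have h43 : ⁅b 4, b 3⁆ = 0 := by rw [← lie_skew, hb.lie_34, neg_zero]
  refine isGeodesic_of_basis B b fun j => ?_
  fin_cases j <;>
    simp [add_lie, h10, hb.lie_12, hb.lie_13, hb.lie_14, h40, h41, h42, h43, horth, ht]

lemma isGeodesic_two_add_smul_three (hb : IsSl2SemidirectBasis b)
    (horth : ∀ i j : Fin 5, B (b i) (b j) = if i = j then (1 : ℝ) else 0)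
    {t : ℝ} (ht : t * t = 2) : IsGeodesic B (b 2 + t • b 3) := by
  have h20 : ⁅b 2, b 0⁆ = (2 : ℝ) • b 2 := by rw [← lie_skew, hb.lie_02]; module
  have h21 : ⁅b 2, b 1⁆ = -b 0 := by rw [← lie_skew, hb.lie_12]
  have h30 : ⁅b 3, b 0⁆ = -b 3 := by rw [← lie_skew, hb.lie_03]
  have h31 : ⁅b 3, b 1⁆ = 0 := by rw [← lie_skew, hb.lie_13, neg_zero]
  have h32 : ⁅b 3, b 2⁆ = -b 4 := by rw [← lie_skew, hb.lie_23]
  refine isGeodesic_of_basis B b fun j => ?_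
  fin_cases j <;>
    simp [add_lie, h20, h21, hb.lie_23, hb.lie_24, h30, h31, h32, hb.lie_34, horth, ht]

lemma isGeodesic_pairedFamily (hb : IsSl2SemidirectBasis b)
    (horth : ∀ i j : Fin 5, B (b i) (b j) = if i = j then (1 : ℝ) else 0)
    {t : ℝ} (ht : t * t = 2) (i : Fin 5) : IsGeodesic B (pairedFamily b t i) := by
  have ht' : -t * -t = 2 := by rw [neg_mul_neg, ht]
  fin_cases i
  · exact hb.isGeodesic_zero horth
  · exact hb.isGeodesic_one_add_smul_four horth ht
  · simpa [pairedFamily, sub_eq_add_neg] using hb.isGeodesic_one_add_smul_four horth ht'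
  · exact hb.isGeodesic_two_add_smul_three horth ht
  · simpa [pairedFamily, sub_eq_add_neg] using hb.isGeodesic_two_add_smul_three horth ht'

end IsSl2SemidirectBasis

theorem sl2_semidirect_geodesic_basis_general
    {L : Type*} [LieRing L] [LieAlgebra ℝ L]
    (b : Module.Basis (Fin 5) ℝ L)
    (h12 : ⁅b 0, b 1⁆ = (2 : ℝ) • b 1) (h13 : ⁅b 0, b 2⁆ = (-2 : ℝ) • b 2)
    (h14 : ⁅b 0, b 3⁆ = b 3) (h15 : ⁅b 0, b 4⁆ = -b 4)
    (h23 : ⁅b 1, b 2⁆ = b 0) (h34 : ⁅b 2, b 3⁆ = b 4) (h25 : ⁅b 1, b 4⁆ = b 3)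
    (h24 : ⁅b 1, b 3⁆ = (0 : L)) (h35 : ⁅b 2, b 4⁆ = (0 : L))
    (h45 : ⁅b 3, b 4⁆ = (0 : L))
    (B : L →ₗ[ℝ] L →ₗ[ℝ] ℝ)
    (horth : ∀ i j : Fin 5, B (b i) (b j) = if i = j then (1 : ℝ) else 0) :
    LinearIndependent ℝ
      ![b 0, b 1 + Real.sqrt 2 • b 4, b 1 - Real.sqrt 2 • b 4,
        b 2 + Real.sqrt 2 • b 3, b 2 - Real.sqrt 2 • b 3] ∧
    Submodule.span ℝ
      (Set.range ![b 0, b 1 + Real.sqrt 2 • b 4, b 1 - Real.sqrt 2 • b 4,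
        b 2 + Real.sqrt 2 • b 3, b 2 - Real.sqrt 2 • b 3]) = ⊤ ∧
    ∀ i : Fin 5,
      (![b 0, b 1 + Real.sqrt 2 • b 4, b 1 - Real.sqrt 2 • b 4,
         b 2 + Real.sqrt 2 • b 3, b 2 - Real.sqrt 2 • b 3] i ≠ 0) ∧
      ∀ W : L,
        B (![b 0, b 1 + Real.sqrt 2 • b 4, b 1 - Real.sqrt 2 • b 4,
             b 2 + Real.sqrt 2 • b 3, b 2 - Real.sqrt 2 • b 3] i)
          ⁅![b 0, b 1 + Real.sqrt 2 • b 4, b 1 - Real.sqrt 2 • b 4,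
             b 2 + Real.sqrt 2 • b 3, b 2 - Real.sqrt 2 • b 3] i, W⁆ = 0 := by
  have hb : IsSl2SemidirectBasis b := ⟨h12, h13, h14, h15, h23, h34, h25, h24, h35, h45⟩
  have hsqrt : Real.sqrt 2 ≠ 0 := by positivity
  have hli := linearIndependent_pairedFamily b hsqrt
  exact ⟨hli, span_pairedFamily b hsqrt,
    fun i => ⟨hli.ne_zero i, hb.isGeodesic_pairedFamily horth (Real.mul_self_sqrt zero_le_two) i⟩⟩

/-- In `sl(2,ℝ) ⋉ ℝ²` with basis `X₁,…,X₅` (relations as in the paper) and the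
inner product making `X₁,…,X₅` orthonormal, the five elements
`X₁, X₂+√2·X₅, X₂−√2·X₅, X₃+√2·X₄, X₃−√2·X₄` form a basis consisting of
geodesic elements. -/
theorem sl2_semidirect_geodesic_basis
    {L : Type*} [LieRing L] [LieAlgebra ℝ L]
    (b : Module.Basis (Fin 5) ℝ L)
    (h12 : ⁅b 0, b 1⁆ = (2 : ℝ) • b 1) (h13 : ⁅b 0, b 2⁆ = (-2 : ℝ) • b 2)
    (h14 : ⁅b 0, b 3⁆ = b 3) (h15 : ⁅b 0, b 4⁆ = -b 4)
    (h23 : ⁅b 1, b 2⁆ = b 0) (h34 : ⁅b 2, b 3⁆ = b 4) (h25 : ⁅b 1, b 4⁆ = b 3)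
    (h24 : ⁅b 1, b 3⁆ = (0 : L)) (h35 : ⁅b 2, b 4⁆ = (0 : L))
    (h45 : ⁅b 3, b 4⁆ = (0 : L))
    (B : L →ₗ[ℝ] L →ₗ[ℝ] ℝ)
    (hsymm : ∀ x y : L, B x y = B y x)
    (hpos : ∀ x : L, x ≠ 0 → 0 < B x x)
    (horth : ∀ i j : Fin 5, B (b i) (b j) = if i = j then (1 : ℝ) else 0) :
    LinearIndependent ℝ
      ![b 0, b 1 + Real.sqrt 2 • b 4, b 1 - Real.sqrt 2 • b 4,
        b 2 + Real.sqrt 2 • b 3, b 2 - Real.sqrt 2 • b 3] ∧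
    Submodule.span ℝ
      (Set.range ![b 0, b 1 + Real.sqrt 2 • b 4, b 1 - Real.sqrt 2 • b 4,
        b 2 + Real.sqrt 2 • b 3, b 2 - Real.sqrt 2 • b 3]) = ⊤ ∧
    ∀ i : Fin 5,
      (![b 0, b 1 + Real.sqrt 2 • b 4, b 1 - Real.sqrt 2 • b 4,
         b 2 + Real.sqrt 2 • b 3, b 2 - Real.sqrt 2 • b 3] i ≠ 0) ∧
      ∀ W : L,
        B (![b 0, b 1 + Real.sqrt 2 • b 4, b 1 - Real.sqrt 2 • b 4,
             b 2 + Real.sqrt 2 • b 3, b 2 - Real.sqrt 2 • b 3] i)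
          ⁅![b 0, b 1 + Real.sqrt 2 • b 4, b 1 - Real.sqrt 2 • b 4,
             b 2 + Real.sqrt 2 • b 3, b 2 - Real.sqrt 2 • b 3] i, W⁆ = 0 :=
  sl2_semidirect_geodesic_basis_general b h12 h13 h14 h15 h23 h34 h25 h24 h35 h45 B horth
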